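/- For μ, λ ∈ (K*)⁴, the modules V₁(μ) and V₁(λ) are isomorphic as right M₂(α,β)-modules if and only if there exist integers u, v with 0 ≤ u ≤ l₁−1 and 0 ≤ v ≤ l₂−1 such that μ₁^{l₁} = λ₁^{l₁}β^{vl₁}, μ₂^{l₂} = λ₂^{l₂}β^{−ul₂}, μ₃ = λ₃(αβ)^{−u}(α⁻¹β)^{v} and μ₄ = λ₄(α⁻¹β)^{v}. -/

import Mathlib

noncomputable section

open MulOpposite

variable {K : Type*} [Field K]

/-- Defining relations of the two-parameter quantum matrix algebra `M₂(α,β)`.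
Generators: `0 ↦ X₁₁`, `1 ↦ X₁₂`, `2 ↦ X₂₁`, `3 ↦ X₂₂`. -/
inductive QMRel (α β : K) : FreeAlgebra K (Fin 4) → FreeAlgebra K (Fin 4) → Prop
  | r12_11 : QMRel α β (FreeAlgebra.ι K 1 * FreeAlgebra.ι K 0)
      (α • (FreeAlgebra.ι K 0 * FreeAlgebra.ι K 1))
  | r21_11 : QMRel α β (FreeAlgebra.ι K 2 * FreeAlgebra.ι K 0)
      (β • (FreeAlgebra.ι K 0 * FreeAlgebra.ι K 2))
  | r22_21 : QMRel α β (FreeAlgebra.ι K 3 * FreeAlgebra.ι K 2)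
      (α • (FreeAlgebra.ι K 2 * FreeAlgebra.ι K 3))
  | r22_12 : QMRel α β (FreeAlgebra.ι K 3 * FreeAlgebra.ι K 1)
      (β • (FreeAlgebra.ι K 1 * FreeAlgebra.ι K 3))
  | r21_12 : QMRel α β (FreeAlgebra.ι K 2 * FreeAlgebra.ι K 1)
      ((β * α⁻¹) • (FreeAlgebra.ι K 1 * FreeAlgebra.ι K 2))
  | r22_11 : QMRel α β (FreeAlgebra.ι K 3 * FreeAlgebra.ι K 0)
      (FreeAlgebra.ι K 0 * FreeAlgebra.ι K 3 + (β - α⁻¹) • (FreeAlgebra.ι K 1 * FreeAlgebra.ι K 2))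

/-- The two-parameter quantum matrix algebra `M₂(α,β)`. -/
abbrev QM (α β : K) : Type _ := RingQuot (QMRel α β)

def X11 (α β : K) : QM α β := RingQuot.mkAlgHom K (QMRel α β) (FreeAlgebra.ι K 0)
def X12 (α β : K) : QM α β := RingQuot.mkAlgHom K (QMRel α β) (FreeAlgebra.ι K 1)
def X21 (α β : K) : QM α β := RingQuot.mkAlgHom K (QMRel α β) (FreeAlgebra.ι K 2)
def X22 (α β : K) : QM α β := RingQuot.mkAlgHom K (QMRel α β) (FreeAlgebra.ι K 3)

/-- The quantum determinant `D = X₁₁X₂₂ − α⁻¹X₁₂X₂₁`. -/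
def Dq (α β : K) : QM α β := X11 α β * X22 α β - α⁻¹ • (X12 α β * X21 α β)

/-- `l₂ := ord(αβ⁻¹)`. -/
def l2 (α β : K) : ℕ := orderOf (α * β⁻¹)

open Classical in
/-- `l₁ := ord(αβ)` if `ord(β) ∣ ord(αβ)·ord(αβ⁻¹)`, and `l₁ := 2·ord(αβ)` otherwise. -/
def l1 (α β : K) : ℕ :=
  if orderOf β ∣ orderOf (α * β) * orderOf (α * β⁻¹) then orderOf (α * β)
  else 2 * orderOf (α * β)

/-- The underlying vector space of the modules `V₁(μ)` and `V₂(μ)`. -/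
abbrev V12 (α β : K) : Type _ := (ZMod (l1 α β) × ZMod (l2 α β)) → K

/-- The underlying vector space of the module `V₃(μ)`. -/
abbrev V3 (α β : K) : Type _ := (ZMod (orderOf (α * β)) × ZMod (l2 α β)) → K

/-- The basis vectors `e(a,b)` of `V₁(μ)` and `V₂(μ)`. -/
def e12 (α β : K) (a : ZMod (l1 α β)) (b : ZMod (l2 α β)) : V12 α β := Pi.single (a, b) 1

/-- The basis vectors `e(a,b)` of `V₃(μ)`. -/
def e3 (α β : K) (a : ZMod (orderOf (α * β))) (b : ZMod (l2 α β)) : V3 α β := Pi.single (a, b) 1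

/-- `ρ` is the representation of `M₂(α,β)` on `V₁(μ₁,μ₂,μ₃,μ₄)` (a right module,
presented as a `K`-algebra map from the opposite algebra to endomorphisms),
given on the basis `e(a,b)`, `0 ≤ a ≤ l₁−1`, `0 ≤ b ≤ l₂−1`, by the formulas:
`e(a,b)X₁₁ = μ₁β^b e(a⊕1,b)`;
`e(a,b)X₁₂ = μ₂⁻¹μ₃(α⁻¹β)^b(αβ)^{−a} e(a,b−1)` if `b ≠ 0`,
  `e(a,0)X₁₂ = μ₂⁻¹μ₃β^{al₂}(αβ)^{−a} e(a,l₂−1)`;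
`e(a,b)X₂₁ = μ₂ e(a,b+1)` if `b ≠ l₂−1`, `e(a,l₂−1)X₂₁ = μ₂β^{−al₂} e(a,0)`;
`e(a,b)X₂₂ = μ₁⁻¹α^{−b}(μ₄ + β(αβ)^{−a}μ₃) e(a⊖1,b)`,
with index arithmetic modulo `l₁` (first slot) and `l₂` (second slot). -/
def IsV1Rep (α β μ₁ μ₂ μ₃ μ₄ : K)
    (ρ : (QM α β)ᵐᵒᵖ →ₐ[K] Module.End K (V12 α β)) : Prop :=
  (∀ a b, ρ (op (X11 α β)) (e12 α β a b) = (μ₁ * β ^ b.val) • e12 α β (a + 1) b) ∧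
  (∀ a b, ρ (op (X12 α β)) (e12 α β a b) =
    (if b = 0 then μ₂⁻¹ * μ₃ * β ^ (a.val * l2 α β) * ((α * β) ^ a.val)⁻¹
      else μ₂⁻¹ * μ₃ * (α⁻¹ * β) ^ b.val * ((α * β) ^ a.val)⁻¹) • e12 α β a (b - 1)) ∧
  (∀ a b, ρ (op (X21 α β)) (e12 α β a b) =
    (if b.val = l2 α β - 1 then μ₂ * (β ^ (a.val * l2 α β))⁻¹ else μ₂) • e12 α β a (b + 1)) ∧
  (∀ a b, ρ (op (X22 α β)) (e12 α β a b) =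
    (μ₁⁻¹ * (α ^ b.val)⁻¹ * (μ₄ + β * ((α * β) ^ a.val)⁻¹ * μ₃)) • e12 α β (a - 1) b)

/-- `ρ` is the representation of `M₂(α,β)` on `V₂(μ₁,μ₂,μ₃)` given on the basis
`e(a,b)` by:
`e(a,b)X₁₁ = μ₁⁻¹μ₃α⁻¹(α⁻¹β)^b((αβ)^a − 1) e(a−1,b)` if `a ≠ 0`, `e(0,b)X₁₁ = 0`;
`e(a,b)X₁₂ = μ₂⁻¹μ₃β^a(α⁻¹β)^b e(a,b∔(−1))`;
`e(a,b)X₂₁ = μ₂α^a e(a,b∔1)`;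
`e(a,b)X₂₂ = μ₁ e(a+1,b)` if `a ≠ l₁−1`, `e(l₁−1,b)X₂₂ = μ₁α^{−bl₁} e(0,b)`. -/
def IsV2Rep (α β μ₁ μ₂ μ₃ : K)
    (ρ : (QM α β)ᵐᵒᵖ →ₐ[K] Module.End K (V12 α β)) : Prop :=
  (∀ a b, ρ (op (X11 α β)) (e12 α β a b) =
    (if a = 0 then 0
      else μ₁⁻¹ * μ₃ * α⁻¹ * (α⁻¹ * β) ^ b.val * ((α * β) ^ a.val - 1)) • e12 α β (a - 1) b) ∧
  (∀ a b, ρ (op (X12 α β)) (e12 α β a b) =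
    (μ₂⁻¹ * μ₃ * β ^ a.val * (α⁻¹ * β) ^ b.val) • e12 α β a (b - 1)) ∧
  (∀ a b, ρ (op (X21 α β)) (e12 α β a b) = (μ₂ * α ^ a.val) • e12 α β a (b + 1)) ∧
  (∀ a b, ρ (op (X22 α β)) (e12 α β a b) =
    (if a.val = l1 α β - 1 then μ₁ * (α ^ (b.val * l1 α β))⁻¹ else μ₁) • e12 α β (a + 1) b)

/-- `ρ` is the representation of `M₂(α,β)` on `V₃(μ₁,μ₂)` given on the basis
`e(a,b)`, `0 ≤ a ≤ ord(αβ)−1`, `0 ≤ b ≤ l₂−1`, by: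
`e(a,b)X₁₁ = μ₂α⁻¹(α⁻¹β)^b((αβ)^a − 1) e(a−1,b)` if `a ≠ 0`, `e(0,b)X₁₁ = 0`;
`e(a,b)X₁₂ = μ₁⁻¹μ₂β^a(α⁻¹β)^b e(a,b∔(−1))`;
`e(a,b)X₂₁ = μ₁α^a e(a,b∔1)`;
`e(a,b)X₂₂ = e(a+1,b)` if `a ≠ ord(αβ)−1`, `e(ord(αβ)−1,b)X₂₂ = 0`. -/
def IsV3Rep (α β μ₁ μ₂ : K)
    (ρ : (QM α β)ᵐᵒᵖ →ₐ[K] Module.End K (V3 α β)) : Prop :=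
  (∀ a b, ρ (op (X11 α β)) (e3 α β a b) =
    (if a = 0 then 0
      else μ₂ * α⁻¹ * (α⁻¹ * β) ^ b.val * ((α * β) ^ a.val - 1)) • e3 α β (a - 1) b) ∧
  (∀ a b, ρ (op (X12 α β)) (e3 α β a b) =
    (μ₁⁻¹ * μ₂ * β ^ a.val * (α⁻¹ * β) ^ b.val) • e3 α β a (b - 1)) ∧
  (∀ a b, ρ (op (X21 α β)) (e3 α β a b) = (μ₁ * α ^ a.val) • e3 α β a (b + 1)) ∧
  (∀ a b, ρ (op (X22 α β)) (e3 α β a b) =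
    if a.val = orderOf (α * β) - 1 then 0 else e3 α β (a + 1) b)

/-!
The elements `X₁₁^{l₁}`, `X₂₁^{l₂}`, `X₁₂X₂₁` and `X₁₁X₂₂` act diagonally on the basis `e(a,b)`.
An isomorphism `V₁(μ) ≅ V₁(ν)` maps `e(0,0)` to a vector with a nonzero coordinate at some
`e(u,v)`, so the four eigenvalues at `e(0,0)` in `V₁(μ)` agree with those at `e(u,v)` in `V₁(ν)`;
these four equalities are the stated conditions.

Conversely, under the conditions `e(a,b) ↦ μ₁^{-a} μ₂^{-b} e(u,v) X₁₁^a X₂₁^b` is an isomorphism.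
The conditions make `e(u,v)` fixed by `μ₁^{-l₁} X₁₁^{l₁}` and by `μ₂^{-l₂} X₂₁^{l₂}`, which together
with `X₂₁X₁₁ = βX₁₁X₂₁` gives compatibility with `X₁₁` and `X₂₁`. Compatibility with the diagonal
elements `X₁₂X₂₁` and `X₁₁X₂₂` is the matching of their eigenvalues, and it descends to `X₁₂` and
`X₂₂` because `X₂₁` acts injectively and `X₁₁` surjectively.
-/

section MonomialMaps

variable {ι : Type*} [DecidableEq ι]

def IsMonomialAlong (L : Module.End K (ι → K)) (σ : ι → ι) : Prop :=
  ∀ i, ∃ c : K, c ≠ 0 ∧ L (Pi.single i 1) = c • Pi.single (σ i) 1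

namespace IsMonomialAlong

variable {L L' : Module.End K (ι → K)} {σ σ' : ι → ι}

lemma smul (h : IsMonomialAlong L σ) {c : K} (hc : c ≠ 0) : IsMonomialAlong (c • L) σ := by
  intro i
  obtain ⟨d, hd, hL⟩ := h i
  exact ⟨c * d, mul_ne_zero hc hd, by rw [LinearMap.smul_apply, hL, smul_smul]⟩

lemma mul (h' : IsMonomialAlong L' σ') (h : IsMonomialAlong L σ) :
    IsMonomialAlong (L' * L) (σ' ∘ σ) := by
  intro i
  obtain ⟨c, hc, hL⟩ := h i
  obtain ⟨c', hc', hL'⟩ := h' (σ i)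
  exact ⟨c * c', mul_ne_zero hc hc', by
    rw [Module.End.mul_apply, hL, map_smul, hL', smul_smul, Function.comp_apply]⟩

lemma pow (h : IsMonomialAlong L σ) (n : ℕ) : IsMonomialAlong (L ^ n) σ^[n] := by
  induction n with
  | zero => exact fun i => ⟨1, one_ne_zero, by simp⟩
  | succ n ih => rw [pow_succ', Function.iterate_succ']; exact h.mul ih

lemma surjective [Fintype ι] (h : IsMonomialAlong L σ) (hσ : σ.Surjective) :
    Function.Surjective L := by
  rw [← LinearMap.range_eq_top, eq_top_iff, ← (Pi.basisFun K ι).span_eq, Submodule.span_le]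
  rintro _ ⟨j, rfl⟩
  obtain ⟨i, rfl⟩ := hσ j
  obtain ⟨c, hc, hL⟩ := h i
  exact ⟨c⁻¹ • Pi.single i 1, by rw [map_smul, hL, smul_smul, inv_mul_cancel₀ hc, one_smul,
    Pi.basisFun_apply]⟩

lemma bijective [Fintype ι] (h : IsMonomialAlong L σ) (hσ : σ.Surjective) : Function.Bijective L :=
  have hL := h.surjective hσ
  ⟨LinearMap.injective_iff_surjective.mpr hL, hL⟩

end IsMonomialAlong

lemma Module.End.apply_eq_mul_of_diagonal [Fintype ι] {L : Module.End K (ι → K)} {g : ι → K}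
    (hL : ∀ i, L (Pi.single i 1) = g i • Pi.single i 1) (w : ι → K) (i : ι) :
    L w i = g i * w i := by
  have : L = LinearMap.pi fun j => g j • LinearMap.proj j := by
    refine (Pi.basisFun K ι).ext fun j => ?_
    ext k
    rw [Pi.basisFun_apply, hL]
    by_cases hjk : k = j
    · subst hjk; simp
    · simp [hjk]
  rw [this]
  simp

lemma eigenvalue_eq_of_intertwines_diagonal [Fintype ι] {M : Type*} [AddCommGroup M]
    [Module K M] {f : M →ₗ[K] ι → K} {L : Module.End K M} {L' : Module.End K (ι → K)}
    {g : ι → K}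
    (hf : ∀ w, f (L w) = L' (f w)) (hL' : ∀ i, L' (Pi.single i 1) = g i • Pi.single i 1)
    {x : M} {c : K} (hx : L x = c • x) {i : ι} (hi : f x i ≠ 0) : c = g i := by
  have h := congrFun (hf x) i
  rw [hx, map_smul, Module.End.apply_eq_mul_of_diagonal hL', Pi.smul_apply, smul_eq_mul] at h
  exact mul_right_cancel₀ hi h

lemma IsMonomialAlong.intertwines_diagonal [Fintype ι] {F L L' : Module.End K (ι → K)}
    {σ : ι → ι} {g g' : ι → K}
    (hF : IsMonomialAlong F σ) (hL : ∀ i, L (Pi.single i 1) = g i • Pi.single i 1)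
    (hL' : ∀ i, L' (Pi.single i 1) = g' i • Pi.single i 1) (hg : ∀ i, g i = g' (σ i)) :
    F * L = L' * F := by
  refine (Pi.basisFun K ι).ext fun i => ?_
  obtain ⟨c, -, hFi⟩ := hF i
  rw [Pi.basisFun_apply, Module.End.mul_apply, Module.End.mul_apply, hL, map_smul, hFi, map_smul,
    hL', smul_smul, smul_smul, hg, mul_comm]

end MonomialMaps

section Intertwiners

variable {R A M N : Type*} [CommSemiring R] [Semiring A] [Algebra R A]
  [AddCommMonoid M] [Module R M] [AddCommMonoid N] [Module R N]
  {ρ : Aᵐᵒᵖ →ₐ[R] Module.End R M} {σ : Aᵐᵒᵖ →ₐ[R] Module.End R N} {F : M →ₗ[R] N}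

lemma intertwines_mul {x y : A} (hx : F ∘ₗ ρ (op x) = σ (op x) ∘ₗ F)
    (hy : F ∘ₗ ρ (op y) = σ (op y) ∘ₗ F) :
    F ∘ₗ ρ (op (x * y)) = σ (op (x * y)) ∘ₗ F := by
  simp only [op_mul, map_mul, Module.End.mul_eq_comp, ← LinearMap.comp_assoc, hy]
  rw [LinearMap.comp_assoc, hx, LinearMap.comp_assoc]

lemma intertwines_of_mul_right {x y : A} (hy : F ∘ₗ ρ (op y) = σ (op y) ∘ₗ F)
    (hxy : F ∘ₗ ρ (op (x * y)) = σ (op (x * y)) ∘ₗ F) (hσy : Function.Injective (σ (op y))) :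
    F ∘ₗ ρ (op x) = σ (op x) ∘ₗ F := by
  ext w
  apply hσy
  have h := LinearMap.congr_fun hxy w
  simp only [op_mul, map_mul, Module.End.mul_apply, LinearMap.comp_apply] at h ⊢
  rw [← h]
  exact (LinearMap.congr_fun hy _).symm

lemma intertwines_of_mul_left {x y : A} (hx : F ∘ₗ ρ (op x) = σ (op x) ∘ₗ F)
    (hxy : F ∘ₗ ρ (op (x * y)) = σ (op (x * y)) ∘ₗ F) (hρx : Function.Surjective (ρ (op x))) :
    F ∘ₗ ρ (op y) = σ (op y) ∘ₗ F := by
  ext w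
  obtain ⟨w, rfl⟩ := hρx w
  have h := LinearMap.congr_fun hxy w
  simp only [op_mul, map_mul, Module.End.mul_apply, LinearMap.comp_apply] at h ⊢
  rw [h]
  exact congrArg (σ (op y)) (LinearMap.congr_fun hx w).symm

lemma intertwines_of_adjoin_eq_top {s : Set A} (hs : Algebra.adjoin R s = ⊤)
    (h : ∀ x ∈ s, F ∘ₗ ρ (op x) = σ (op x) ∘ₗ F) (x : A) :
    F ∘ₗ ρ (op x) = σ (op x) ∘ₗ F := by
  induction (hs ▸ Algebra.mem_top : x ∈ Algebra.adjoin R s) using Algebra.adjoin_induction with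
  | mem x hx => exact h x hx
  | algebraMap r =>
    ext w
    simp [← MulOpposite.algebraMap_apply, AlgHom.commutes, Module.algebraMap_end_apply]
  | add x y _ _ hx hy => simp only [op_add, map_add, LinearMap.comp_add, LinearMap.add_comp, hx, hy]
  | mul x y _ _ hx hy => exact intertwines_mul hx hy

end Intertwiners

section QuantumMatrices

variable (α β : K)

lemma adjoin_X11_X12_X21_X22_eq_top :
    Algebra.adjoin K {X11 α β, X12 α β, X21 α β, X22 α β} = ⊤ := by
  have hrange : (RingQuot.mkAlgHom K (QMRel α β)).range = ⊤ :=
    (AlgHom.range_eq_top _).mpr (RingQuot.mkAlgHom_surjective K _)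
  refine top_unique ?_
  rw [← hrange, ← Algebra.map_top, ← FreeAlgebra.adjoin_range_ι, AlgHom.map_adjoin]
  refine Algebra.adjoin_mono ?_
  rintro _ ⟨_, ⟨i, rfl⟩, rfl⟩
  fin_cases i <;> simp [X11, X12, X21, X22]

lemma X21_mul_X11 : X21 α β * X11 α β = β • (X11 α β * X21 α β) := by
  simpa only [X11, X21, map_mul, map_smul] using
    RingQuot.mkAlgHom_rel K (QMRel.r21_11 (α := α) (β := β))

lemma map_op_X11_mul_map_op_X21 {M : Type*} [AddCommMonoid M] [Module K M]
    (ρ : (QM α β)ᵐᵒᵖ →ₐ[K] Module.End K M) :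
    ρ (op (X11 α β)) * ρ (op (X21 α β)) = β • (ρ (op (X21 α β)) * ρ (op (X11 α β))) := by
  rw [← map_mul, ← map_mul, ← op_mul, ← op_mul, X21_mul_X11, op_smul, map_smul]

end QuantumMatrices

section QuantumMatrixReps

variable {α β : K}

lemma intertwines_of_X11_X21_X12_mul_X21_X11_mul_X22 {M N : Type*} [AddCommMonoid M]
    [Module K M] [AddCommMonoid N] [Module K N] {ρ : (QM α β)ᵐᵒᵖ →ₐ[K] Module.End K M}
    {σ : (QM α β)ᵐᵒᵖ →ₐ[K] Module.End K N} {F : M →ₗ[K] N}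
    (h11 : F ∘ₗ ρ (op (X11 α β)) = σ (op (X11 α β)) ∘ₗ F)
    (h21 : F ∘ₗ ρ (op (X21 α β)) = σ (op (X21 α β)) ∘ₗ F)
    (h1221 : F ∘ₗ ρ (op (X12 α β * X21 α β)) = σ (op (X12 α β * X21 α β)) ∘ₗ F)
    (h1122 : F ∘ₗ ρ (op (X11 α β * X22 α β)) = σ (op (X11 α β * X22 α β)) ∘ₗ F)
    (hσ21 : Function.Injective (σ (op (X21 α β))))
    (hρ11 : Function.Surjective (ρ (op (X11 α β)))) (x : QM α β) :
    F ∘ₗ ρ (op x) = σ (op x) ∘ₗ F := by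
  refine intertwines_of_adjoin_eq_top (adjoin_X11_X12_X21_X22_eq_top α β) ?_ x
  rintro x (rfl | rfl | rfl | rfl)
  · exact h11
  · exact intertwines_of_mul_right h21 h1221 hσ21
  · exact h21
  · exact intertwines_of_mul_left h11 h1122 hρ11

end QuantumMatrixReps

section QCommuting

variable {M : Type*} [AddCommGroup M] [Module K M] {T S : Module.End K M} {q : K}

lemma mul_pow_eq_smul_pow_mul (h : T * S = q • (S * T)) (b : ℕ) :
    T * S ^ b = q ^ b • (S ^ b * T) := by
  induction b with
  | zero => simp
  | succ b ih =>
    rw [pow_succ, ← mul_assoc, ih, smul_mul_assoc, mul_assoc, h, mul_smul_comm, smul_smul,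
      ← mul_assoc, pow_succ q]

lemma pow_mul_pow_eq_smul (h : T * S = q • (S * T)) (a b : ℕ) :
    T ^ a * S ^ b = q ^ (a * b) • (S ^ b * T ^ a) := by
  induction a with
  | zero => simp
  | succ a ih =>
    rw [pow_succ, mul_assoc, mul_pow_eq_smul_pow_mul h, mul_smul_comm, ← mul_assoc, ih,
      smul_mul_assoc, smul_smul, mul_assoc, ← pow_succ, ← pow_add, add_mul, one_mul, add_comm]

lemma apply_pow_mul_pow_apply (h : T * S = q • (S * T)) (a b : ℕ) (w : M) :
    T ((S ^ b * T ^ a) w) = q ^ b • (S ^ b * T ^ (a + 1)) w := by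
  rw [← Module.End.mul_apply, ← mul_assoc, mul_pow_eq_smul_pow_mul h, smul_mul_assoc,
    mul_assoc, ← pow_succ', LinearMap.smul_apply]

lemma pow_mul_pow_mod_apply {L : ℕ} {w : M} (hT : (T ^ L) w = w) (a b : ℕ) :
    (S ^ b * T ^ (a % L)) w = (S ^ b * T ^ a) w := by
  have hTk : ∀ k, (T ^ (L * k)) w = w := fun k => by
    induction k with
    | zero => simp
    | succ k ih => rw [Nat.mul_succ, pow_add, Module.End.mul_apply, hT, ih]
  conv_rhs => rw [← Nat.mod_add_div a L, pow_add, ← mul_assoc, Module.End.mul_apply, hTk]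

lemma pow_add_mul_pow_apply (h : T * S = q • (S * T)) (hq : q ≠ 0) {L : ℕ} {w : M}
    (hS : (S ^ L) w = w) (a b : ℕ) :
    (S ^ (b + L) * T ^ a) w = (q ^ (a * L))⁻¹ • (S ^ b * T ^ a) w := by
  have hcomm : S ^ L * T ^ a = (q ^ (a * L))⁻¹ • (T ^ a * S ^ L) := by
    rw [pow_mul_pow_eq_smul h, smul_smul, inv_mul_cancel₀ (pow_ne_zero _ hq), one_smul]
  rw [pow_add, mul_assoc, hcomm, mul_smul_comm, LinearMap.smul_apply, Module.End.mul_apply,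
    Module.End.mul_apply, Module.End.mul_apply, hS, ← Module.End.mul_apply]

end QCommuting

lemma ZMod.val_add_natCast {n : ℕ} [NeZero n] (a : ZMod n) (k : ℕ) :
    (a + k).val = (a.val + k) % n := by
  rw [ZMod.val_add, ZMod.val_natCast, Nat.add_mod_mod]

lemma pow_val_add_natCast {M : Type*} [Monoid M] {x : M} {n : ℕ} [NeZero n] (hx : x ^ n = 1)
    (a : ZMod n) (k : ℕ) : x ^ (a + k).val = x ^ (a.val + k) := by
  rw [ZMod.val_add_natCast, ← pow_eq_pow_mod _ hx]

lemma ZMod.add_one_eq_zero_iff_val_eq {n : ℕ} [NeZero n] (b : ZMod n) :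
    b + 1 = 0 ↔ b.val = n - 1 := by
  obtain ⟨m, rfl⟩ := Nat.exists_eq_succ_of_ne_zero (NeZero.ne n)
  rw [← eq_neg_iff_add_eq_zero, ← (ZMod.val_injective _).eq_iff, ZMod.val_neg_one,
    Nat.succ_sub_one]

lemma ZMod.val_add_one_of_val_ne {n : ℕ} [NeZero n] {b : ZMod n} (hb : b.val ≠ n - 1) :
    (b + 1).val = b.val + 1 := by
  have := b.val_lt
  rw [ZMod.val_add, ZMod.val_one_eq_one_mod, Nat.add_mod_mod, Nat.mod_eq_of_lt (by omega)]

section OrbitMap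

variable {m n : ℕ} [NeZero m] [NeZero n]

def orbitMap (T S : Module.End K (ZMod m × ZMod n → K)) (w₀ : ZMod m × ZMod n → K) :
    Module.End K (ZMod m × ZMod n → K) :=
  (Pi.basisFun K (ZMod m × ZMod n)).constr K fun p => (S ^ p.2.val * T ^ p.1.val) w₀

variable {T S : Module.End K (ZMod m × ZMod n → K)} {q : K} {w₀ : ZMod m × ZMod n → K}

lemma orbitMap_single (a : ZMod m) (b : ZMod n) :
    orbitMap T S w₀ (Pi.single (a, b) 1) = (S ^ b.val * T ^ a.val) w₀ := by
  rw [← Pi.basisFun_apply, orbitMap, Module.Basis.constr_basis]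

lemma IsMonomialAlong.orbitMap (hT : IsMonomialAlong T (· + (1, 0)))
    (hS : IsMonomialAlong S (· + (0, 1))) (c : ZMod m × ZMod n) :
    IsMonomialAlong (orbitMap T S (Pi.single c 1)) (· + c) := by
  rintro ⟨a, b⟩
  obtain ⟨d, hd, h⟩ := ((hS.pow b.val).mul (hT.pow a.val)) c
  refine ⟨d, hd, (orbitMap_single a b).trans (h.trans ?_)⟩
  congr 2
  ext <;> simp [add_comm]

lemma apply_orbitMap_single_fst (h : T * S = q • (S * T)) (hTw : (T ^ m) w₀ = w₀)
    (a : ZMod m) (b : ZMod n) :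
    T (orbitMap T S w₀ (Pi.single (a, b) 1))
      = q ^ b.val • orbitMap T S w₀ (Pi.single (a + 1, b) 1) := by
  rw [orbitMap_single, orbitMap_single, apply_pow_mul_pow_apply h, ← Nat.cast_one (R := ZMod m),
    ZMod.val_add_natCast, pow_mul_pow_mod_apply hTw]

lemma apply_orbitMap_single_snd (h : T * S = q • (S * T)) (hq : q ≠ 0) (hSw : (S ^ n) w₀ = w₀)
    (a : ZMod m) (b : ZMod n) :
    S (orbitMap T S w₀ (Pi.single (a, b) 1))
      = (if b.val = n - 1 then (q ^ (a.val * n))⁻¹ else 1)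
          • orbitMap T S w₀ (Pi.single (a, b + 1) 1) := by
  rw [orbitMap_single, orbitMap_single, ← Module.End.mul_apply, ← mul_assoc, ← pow_succ']
  split_ifs with hb
  · have hwrap := pow_add_mul_pow_apply h hq hSw a.val 0
    rw [zero_add] at hwrap
    rw [(ZMod.add_one_eq_zero_iff_val_eq b).mpr hb, ZMod.val_zero, hb,
      Nat.sub_add_cancel NeZero.one_le, hwrap]
  · rw [ZMod.val_add_one_of_val_ne hb, one_smul]

end OrbitMap

section Periods

variable (α β : K)

lemma l1_pos (hoα : 0 < orderOf α) (hoβ : 0 < orderOf β) : 0 < l1 α β := by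
  have h : 0 < orderOf (α * β) :=
    orderOf_pos_iff.mpr ((orderOf_pos_iff.mp hoα).mul (orderOf_pos_iff.mp hoβ))
  unfold l1
  split_ifs <;> omega

lemma l2_pos (hoα : 0 < orderOf α) (hoβ : 0 < orderOf β) : 0 < l2 α β := by
  obtain ⟨n, hn, hβn⟩ := isOfFinOrder_iff_pow_eq_one.mp (orderOf_pos_iff.mp hoβ)
  have hβinv : IsOfFinOrder β⁻¹ :=
    isOfFinOrder_iff_pow_eq_one.mpr ⟨n, hn, by rw [inv_pow, hβn, inv_one]⟩
  exact orderOf_pos_iff.mpr ((orderOf_pos_iff.mp hoα).mul hβinv)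

lemma mul_pow_l1 : (α * β) ^ l1 α β = 1 := by
  unfold l1
  split_ifs
  · exact pow_orderOf_eq_one _
  · rw [pow_mul', pow_orderOf_eq_one, one_pow]

lemma inv_mul_pow_l2 : (α⁻¹ * β) ^ l2 α β = 1 := by
  have h : α⁻¹ * β = (α * β⁻¹)⁻¹ := by rw [mul_inv, inv_inv]
  rw [h, inv_pow, l2, pow_orderOf_eq_one, inv_one]

end Periods


namespace IsV1Rep

variable {α β μ₁ μ₂ μ₃ μ₄ : K} {ρ : (QM α β)ᵐᵒᵖ →ₐ[K] Module.End K (V12 α β)}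

lemma isMonomialAlong_X11 (hρ : IsV1Rep α β μ₁ μ₂ μ₃ μ₄ ρ) (hβ : β ≠ 0) (hμ₁ : μ₁ ≠ 0) :
    IsMonomialAlong (ρ (op (X11 α β))) (· + (1, 0)) := fun ⟨a, b⟩ =>
  ⟨μ₁ * β ^ b.val, mul_ne_zero hμ₁ (pow_ne_zero _ hβ), by
    simp only [Prod.mk_add_mk, add_zero]; exact hρ.1 a b⟩

lemma isMonomialAlong_X21 (hρ : IsV1Rep α β μ₁ μ₂ μ₃ μ₄ ρ) (hβ : β ≠ 0) (hμ₂ : μ₂ ≠ 0) :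
    IsMonomialAlong (ρ (op (X21 α β))) (· + (0, 1)) := fun ⟨a, b⟩ =>
  ⟨if b.val = l2 α β - 1 then μ₂ * (β ^ (a.val * l2 α β))⁻¹ else μ₂,
    by split_ifs <;> simp [hμ₂, hβ], by simp only [Prod.mk_add_mk, add_zero]; exact hρ.2.2.1 a b⟩

lemma X11_pow_apply (hρ : IsV1Rep α β μ₁ μ₂ μ₃ μ₄ ρ) (n : ℕ) (a : ZMod (l1 α β))
    (b : ZMod (l2 α β)) :
    (ρ (op (X11 α β)) ^ n) (e12 α β a b) = (μ₁ ^ n * β ^ (b.val * n)) • e12 α β (a + n) b := by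
  induction n generalizing a with
  | zero => simp
  | succ n ih =>
    rw [pow_succ, Module.End.mul_apply, hρ.1, map_smul, ih, smul_smul, Nat.cast_succ,
      add_assoc, add_comm (1 : ZMod (l1 α β))]
    congr 1
    ring

lemma X11_pow_l1_apply (hρ : IsV1Rep α β μ₁ μ₂ μ₃ μ₄ ρ) (a : ZMod (l1 α β))
    (b : ZMod (l2 α β)) :
    ρ (op (X11 α β ^ l1 α β)) (e12 α β a b)
      = (μ₁ ^ l1 α β * β ^ (b.val * l1 α β)) • e12 α β a b := by
  rw [op_pow, map_pow, hρ.X11_pow_apply, ZMod.natCast_self, add_zero]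

lemma X21_pow_apply [NeZero (l2 α β)] (hρ : IsV1Rep α β μ₁ μ₂ μ₃ μ₄ ρ) {n : ℕ}
    (hn : n ≤ l2 α β) (a : ZMod (l1 α β)) (b : ZMod (l2 α β)) :
    (ρ (op (X21 α β)) ^ n) (e12 α β a b)
      = (μ₂ ^ n * if b.val + n < l2 α β then 1 else (β ^ (a.val * l2 α β))⁻¹)
          • e12 α β a (b + n) := by
  induction n with
  | zero => simp [b.val_lt]
  | succ n ih =>
    have hb := b.val_lt
    have hbn : (b + n).val = if b.val + n < l2 α β then b.val + n else b.val + n - l2 α β := by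
      rw [ZMod.val_add_natCast]
      split_ifs with h
      · exact Nat.mod_eq_of_lt h
      · rw [Nat.mod_eq_sub_mod (by omega), Nat.mod_eq_of_lt (by omega)]
    rw [pow_succ', Module.End.mul_apply, ih (by omega), map_smul, hρ.2.2.1, smul_smul, hbn,
      Nat.cast_succ, ← add_assoc b]
    congr 1
    split_ifs <;> first | omega | ring

lemma X21_pow_l2_apply [NeZero (l2 α β)] (hρ : IsV1Rep α β μ₁ μ₂ μ₃ μ₄ ρ)
    (a : ZMod (l1 α β)) (b : ZMod (l2 α β)) :
    ρ (op (X21 α β ^ l2 α β)) (e12 α β a b)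
      = (μ₂ ^ l2 α β * (β ^ (a.val * l2 α β))⁻¹) • e12 α β a b := by
  rw [op_pow, map_pow, hρ.X21_pow_apply le_rfl, ZMod.natCast_self, add_zero,
    if_neg (by omega)]

lemma X12_mul_X21_apply [NeZero (l2 α β)] (hρ : IsV1Rep α β μ₁ μ₂ μ₃ μ₄ ρ) (hβ : β ≠ 0)
    (hμ₂ : μ₂ ≠ 0) (a : ZMod (l1 α β)) (b : ZMod (l2 α β)) :
    ρ (op (X12 α β * X21 α β)) (e12 α β a b)
      = (μ₃ * (α⁻¹ * β) ^ b.val * ((α * β) ^ a.val)⁻¹) • e12 α β a b := by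
  rw [op_mul, map_mul, Module.End.mul_apply, hρ.2.1, map_smul, hρ.2.2.1, smul_smul,
    sub_add_cancel]
  have hwrap : (b - 1).val = l2 α β - 1 ↔ b = 0 := by
    rw [← ZMod.add_one_eq_zero_iff_val_eq, sub_add_cancel]
  congr 1
  by_cases hb : b = 0
  · rw [if_pos hb, if_pos (hwrap.mpr hb), hb]
    field_simp
    simp
  · rw [if_neg hb, if_neg (mt hwrap.mp hb)]
    field_simp

lemma X11_mul_X22_apply [NeZero (l1 α β)] (hρ : IsV1Rep α β μ₁ μ₂ μ₃ μ₄ ρ) (hμ₁ : μ₁ ≠ 0)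
    (a : ZMod (l1 α β)) (b : ZMod (l2 α β)) :
    ρ (op (X11 α β * X22 α β)) (e12 α β a b)
      = ((α⁻¹ * β) ^ b.val * (μ₄ + β * ((α * β) ^ (a.val + 1))⁻¹ * μ₃)) • e12 α β a b := by
  rw [op_mul, map_mul, Module.End.mul_apply, hρ.1, map_smul, hρ.2.2.2, smul_smul,
    add_sub_cancel_right, ← Nat.cast_one, pow_val_add_natCast (mul_pow_l1 α β)]
  congr 1
  field_simp
  ring

lemma orbitMap_intertwines_X11 [NeZero (l1 α β)] [NeZero (l2 α β)]
    (hρ : IsV1Rep α β μ₁ μ₂ μ₃ μ₄ ρ) {σ : (QM α β)ᵐᵒᵖ →ₐ[K] Module.End K (V12 α β)}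
    {T S : Module.End K (V12 α β)} {w₀ : V12 α β} (hTS : T * S = β • (S * T))
    (hTw : (T ^ l1 α β) w₀ = w₀) (hσT : σ (op (X11 α β)) = μ₁ • T) :
    orbitMap T S w₀ ∘ₗ ρ (op (X11 α β)) = σ (op (X11 α β)) ∘ₗ orbitMap T S w₀ := by
  refine (Pi.basisFun K _).ext fun ⟨a, b⟩ => ?_
  rw [Pi.basisFun_apply, LinearMap.comp_apply, LinearMap.comp_apply, ← e12, hρ.1, map_smul, hσT,
    LinearMap.smul_apply]
  simp only [e12]
  rw [apply_orbitMap_single_fst hTS hTw, smul_smul, mul_comm]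

lemma orbitMap_intertwines_X21 [NeZero (l1 α β)] [NeZero (l2 α β)]
    (hρ : IsV1Rep α β μ₁ μ₂ μ₃ μ₄ ρ) {σ : (QM α β)ᵐᵒᵖ →ₐ[K] Module.End K (V12 α β)}
    {T S : Module.End K (V12 α β)} {w₀ : V12 α β} (hTS : T * S = β • (S * T)) (hβ : β ≠ 0)
    (hSw : (S ^ l2 α β) w₀ = w₀) (hσS : σ (op (X21 α β)) = μ₂ • S) :
    orbitMap T S w₀ ∘ₗ ρ (op (X21 α β)) = σ (op (X21 α β)) ∘ₗ orbitMap T S w₀ := by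
  refine (Pi.basisFun K _).ext fun ⟨a, b⟩ => ?_
  rw [Pi.basisFun_apply, LinearMap.comp_apply, LinearMap.comp_apply, ← e12, hρ.2.2.1, map_smul,
    hσS, LinearMap.smul_apply]
  simp only [e12]
  rw [apply_orbitMap_single_snd hTS hβ hSw, smul_smul, mul_ite, mul_one]

end IsV1Rep

section Classification

variable {α β μ₁ μ₂ μ₃ μ₄ ν₁ ν₂ ν₃ ν₄ : K} {ρμ ρν : (QM α β)ᵐᵒᵖ →ₐ[K] Module.End K (V12 α β)}

theorem IsV1Rep.exists_shift_of_linearEquiv [NeZero (l1 α β)] [NeZero (l2 α β)]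
    (hρμ : IsV1Rep α β μ₁ μ₂ μ₃ μ₄ ρμ) (hρν : IsV1Rep α β ν₁ ν₂ ν₃ ν₄ ρν) (hβ : β ≠ 0)
    (hμ₁ : μ₁ ≠ 0) (hμ₂ : μ₂ ≠ 0) (hν₁ : ν₁ ≠ 0) (hν₂ : ν₂ ≠ 0) (f : V12 α β ≃ₗ[K] V12 α β)
    (hf : ∀ (x : QM α β) (w : V12 α β), f (ρμ (op x) w) = ρν (op x) (f w)) :
    ∃ u v : ℕ, u ≤ l1 α β - 1 ∧ v ≤ l2 α β - 1 ∧
      μ₁ ^ l1 α β = ν₁ ^ l1 α β * β ^ (v * l1 α β) ∧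
      μ₂ ^ l2 α β = ν₂ ^ l2 α β * (β ^ (u * l2 α β))⁻¹ ∧
      μ₃ = ν₃ * ((α * β) ^ u)⁻¹ * (α⁻¹ * β) ^ v ∧
      μ₄ = ν₄ * (α⁻¹ * β) ^ v := by
  obtain ⟨⟨U, V⟩, hUV⟩ : ∃ p, f (e12 α β 0 0) p ≠ 0 := by
    by_contra! h
    have : e12 α β 0 0 = 0 := f.map_eq_zero_iff.mp (funext h)
    simpa [e12] using congrFun this (0, 0)
  have eigen : ∀ (z : QM α β) (c : K) (g : ZMod (l1 α β) → ZMod (l2 α β) → K),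
      ρμ (op z) (e12 α β 0 0) = c • e12 α β 0 0 →
      (∀ a b, ρν (op z) (e12 α β a b) = g a b • e12 α β a b) → c = g U V :=
    fun z _ _ hz hg => eigenvalue_eq_of_intertwines_diagonal (f := f.toLinearMap) (hf z)
      (fun p => hg p.1 p.2) hz hUV
  have h1 := eigen _ _ _ (hρμ.X11_pow_l1_apply 0 0) hρν.X11_pow_l1_apply
  have h2 := eigen _ _ _ (hρμ.X21_pow_l2_apply 0 0) hρν.X21_pow_l2_apply
  have h3 := eigen _ _ _ (hρμ.X12_mul_X21_apply hβ hμ₂ 0 0) (hρν.X12_mul_X21_apply hβ hν₂)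
  have h4 := eigen _ _ _ (hρμ.X11_mul_X22_apply hμ₁ 0 0) (hρν.X11_mul_X22_apply hν₁)
  simp only [ZMod.val_zero, zero_mul, zero_add, pow_zero, pow_one, inv_one, mul_one, one_mul]
    at h1 h2 h3 h4
  refine ⟨U.val, V.val, Nat.le_sub_one_of_lt U.val_lt, Nat.le_sub_one_of_lt V.val_lt, h1, h2,
    by rw [h3]; ring, ?_⟩
  rw [h3, pow_succ] at h4
  linear_combination h4

theorem IsV1Rep.exists_linearEquiv_of_shift [NeZero (l1 α β)] [NeZero (l2 α β)]
    (hρμ : IsV1Rep α β μ₁ μ₂ μ₃ μ₄ ρμ) (hρν : IsV1Rep α β ν₁ ν₂ ν₃ ν₄ ρν) (hβ : β ≠ 0)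
    (hμ₁ : μ₁ ≠ 0) (hμ₂ : μ₂ ≠ 0) (hν₁ : ν₁ ≠ 0) (hν₂ : ν₂ ≠ 0) {u v : ℕ}
    (hu : u < l1 α β) (hv : v < l2 α β)
    (h1 : μ₁ ^ l1 α β = ν₁ ^ l1 α β * β ^ (v * l1 α β))
    (h2 : μ₂ ^ l2 α β = ν₂ ^ l2 α β * (β ^ (u * l2 α β))⁻¹)
    (h3 : μ₃ = ν₃ * ((α * β) ^ u)⁻¹ * (α⁻¹ * β) ^ v) (h4 : μ₄ = ν₄ * (α⁻¹ * β) ^ v) :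
    ∃ f : V12 α β ≃ₗ[K] V12 α β,
      ∀ (x : QM α β) (w : V12 α β), f (ρμ (op x) w) = ρν (op x) (f w) := by
  set T : Module.End K (V12 α β) := μ₁⁻¹ • ρν (op (X11 α β)) with hT
  set S : Module.End K (V12 α β) := μ₂⁻¹ • ρν (op (X21 α β)) with hS
  have hTS : T * S = β • (S * T) := by
    rw [hT, hS, smul_mul_smul_comm, smul_mul_smul_comm, smul_comm β, mul_comm μ₁⁻¹,
      map_op_X11_mul_map_op_X21]
  have hTw : (T ^ l1 α β) (e12 α β u v) = e12 α β u v := by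
    rw [hT, smul_pow, ← map_pow, ← op_pow, LinearMap.smul_apply, hρν.X11_pow_l1_apply,
      ZMod.val_cast_of_lt hv, smul_smul, ← h1, ← mul_pow, inv_mul_cancel₀ hμ₁, one_pow, one_smul]
  have hSw : (S ^ l2 α β) (e12 α β u v) = e12 α β u v := by
    rw [hS, smul_pow, ← map_pow, ← op_pow, LinearMap.smul_apply, hρν.X21_pow_l2_apply,
      ZMod.val_cast_of_lt hu, smul_smul, ← h2, ← mul_pow, inv_mul_cancel₀ hμ₂, one_pow, one_smul]
  set F := orbitMap T S (e12 α β u v)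
  have hFmono : IsMonomialAlong F (· + ((u : ZMod (l1 α β)), (v : ZMod (l2 α β)))) :=
    IsMonomialAlong.orbitMap ((hρν.isMonomialAlong_X11 hβ hν₁).smul (inv_ne_zero hμ₁))
      ((hρν.isMonomialAlong_X21 hβ hν₂).smul (inv_ne_zero hμ₂)) _
  have h11 := hρμ.orbitMap_intertwines_X11 hTS hTw (smul_inv_smul₀ hμ₁ _).symm
  have h21 := hρμ.orbitMap_intertwines_X21 hTS hβ hSw (smul_inv_smul₀ hμ₂ _).symm
  have h1221 : F ∘ₗ ρμ (op (X12 α β * X21 α β)) = ρν (op (X12 α β * X21 α β)) ∘ₗ F :=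
    hFmono.intertwines_diagonal (fun p => hρμ.X12_mul_X21_apply hβ hμ₂ p.1 p.2)
      (fun p => hρν.X12_mul_X21_apply hβ hν₂ p.1 p.2) fun ⟨a, b⟩ => by
        simp only [Prod.mk_add_mk]
        rw [pow_val_add_natCast (inv_mul_pow_l2 α β), pow_val_add_natCast (mul_pow_l1 α β), h3]
        ring
  have h1122 : F ∘ₗ ρμ (op (X11 α β * X22 α β)) = ρν (op (X11 α β * X22 α β)) ∘ₗ F :=
    hFmono.intertwines_diagonal (fun p => hρμ.X11_mul_X22_apply hμ₁ p.1 p.2)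
      (fun p => hρν.X11_mul_X22_apply hν₁ p.1 p.2) fun ⟨a, b⟩ => by
        simp only [Prod.mk_add_mk]
        rw [pow_val_add_natCast (inv_mul_pow_l2 α β), ZMod.val_add_natCast, pow_succ (α * β),
          pow_succ (α * β), ← pow_eq_pow_mod _ (mul_pow_l1 α β), h3, h4]
        ring
  refine ⟨LinearEquiv.ofBijective F (hFmono.bijective (add_right_surjective _)), fun x =>
    LinearMap.congr_fun (intertwines_of_X11_X21_X12_mul_X21_X11_mul_X22 h11 h21 h1221 h1122
      ((hρν.isMonomialAlong_X21 hβ hν₂).bijective (add_right_surjective _)).1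
      ((hρμ.isMonomialAlong_X11 hβ hμ₁).surjective (add_right_surjective _)) x)⟩

end Classification

theorem stmt17_general (α β : K)
    (hβ : β ≠ 0) (hoα : 0 < orderOf α) (hoβ : 0 < orderOf β)
    (μ₁ μ₂ μ₃ μ₄ ν₁ ν₂ ν₃ ν₄ : K)
    (hμ₁ : μ₁ ≠ 0) (hμ₂ : μ₂ ≠ 0)
    (hν₁ : ν₁ ≠ 0) (hν₂ : ν₂ ≠ 0)
    (ρμ ρν : (QM α β)ᵐᵒᵖ →ₐ[K] Module.End K (V12 α β))
    (hρμ : IsV1Rep α β μ₁ μ₂ μ₃ μ₄ ρμ) (hρν : IsV1Rep α β ν₁ ν₂ ν₃ ν₄ ρν) :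
    (∃ f : V12 α β ≃ₗ[K] V12 α β,
        ∀ (x : QM α β) (w : V12 α β), f (ρμ (op x) w) = ρν (op x) (f w)) ↔
    ∃ u v : ℕ, u ≤ l1 α β - 1 ∧ v ≤ l2 α β - 1 ∧
      μ₁ ^ l1 α β = ν₁ ^ l1 α β * β ^ (v * l1 α β) ∧
      μ₂ ^ l2 α β = ν₂ ^ l2 α β * (β ^ (u * l2 α β))⁻¹ ∧
      μ₃ = ν₃ * ((α * β) ^ u)⁻¹ * (α⁻¹ * β) ^ v ∧
      μ₄ = ν₄ * (α⁻¹ * β) ^ v := by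
  have hl1 := l1_pos α β hoα hoβ
  have hl2 := l2_pos α β hoα hoβ
  have : NeZero (l1 α β) := ⟨hl1.ne'⟩
  have : NeZero (l2 α β) := ⟨hl2.ne'⟩
  constructor
  · rintro ⟨f, hf⟩
    exact hρμ.exists_shift_of_linearEquiv hρν hβ hμ₁ hμ₂ hν₁ hν₂ f hf
  · rintro ⟨u, v, hu, hv, h1, h2, h3, h4⟩
    exact hρμ.exists_linearEquiv_of_shift hρν hβ hμ₁ hμ₂ hν₁ hν₂ (by omega) (by omega)
      h1 h2 h3 h4

/-- Theorem 7.1 of the paper. For `μ, ν ∈ (K*)⁴`, the modules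
`V₁(μ)` and `V₁(ν)` are isomorphic as right `M₂(α,β)`-modules iff there exist
`0 ≤ u ≤ l₁−1`, `0 ≤ v ≤ l₂−1` with `μ₁^{l₁} = ν₁^{l₁}β^{vl₁}`,
`μ₂^{l₂} = ν₂^{l₂}β^{−ul₂}`, `μ₃ = ν₃(αβ)^{−u}(α⁻¹β)^v`, `μ₄ = ν₄(α⁻¹β)^v`. -/
theorem stmt17 [IsAlgClosed K] (α β : K)
    (hα : α ≠ 0) (hβ : β ≠ 0) (hoα : 0 < orderOf α) (hoβ : 0 < orderOf β)
    (hab : α * β ≠ 1)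
    (μ₁ μ₂ μ₃ μ₄ ν₁ ν₂ ν₃ ν₄ : K)
    (hμ₁ : μ₁ ≠ 0) (hμ₂ : μ₂ ≠ 0) (hμ₃ : μ₃ ≠ 0) (hμ₄ : μ₄ ≠ 0)
    (hν₁ : ν₁ ≠ 0) (hν₂ : ν₂ ≠ 0) (hν₃ : ν₃ ≠ 0) (hν₄ : ν₄ ≠ 0)
    (ρμ ρν : (QM α β)ᵐᵒᵖ →ₐ[K] Module.End K (V12 α β))
    (hρμ : IsV1Rep α β μ₁ μ₂ μ₃ μ₄ ρμ) (hρν : IsV1Rep α β ν₁ ν₂ ν₃ ν₄ ρν) :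
    (∃ f : V12 α β ≃ₗ[K] V12 α β,
        ∀ (x : QM α β) (w : V12 α β), f (ρμ (op x) w) = ρν (op x) (f w)) ↔
    ∃ u v : ℕ, u ≤ l1 α β - 1 ∧ v ≤ l2 α β - 1 ∧
      μ₁ ^ l1 α β = ν₁ ^ l1 α β * β ^ (v * l1 α β) ∧
      μ₂ ^ l2 α β = ν₂ ^ l2 α β * (β ^ (u * l2 α β))⁻¹ ∧
      μ₃ = ν₃ * ((α * β) ^ u)⁻¹ * (α⁻¹ * β) ^ v ∧
      μ₄ = ν₄ * (α⁻¹ * β) ^ v :=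
  stmt17_general α β hβ hoα hoβ μ₁ μ₂ μ₃ μ₄ ν₁ ν₂ ν₃ ν₄ hμ₁ hμ₂ hν₁ hν₂ ρμ ρν hρμ hρν
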